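/- Fix γ ≥ 0 and define h : (0,1) → ℝ by h(s) = s log s + ((4γ+1)/(2γ+1)) (1−s) log(1−s) + ((2γs+1)/(2γ+1)) log(2γs+1). Then for every s ∈ (0,1), the second derivative of h satisfies s(1−s)(1+2γs) · h''(s) = 1 + 4γs. -/

import Mathlib

/-!
Writing `φ(x) = x log x`, the entropy density is the affine mixture
`h(s) = φ(s) + a φ(1 - s) + b φ(2γs + 1)` with `a = (4γ+1)/(2γ+1)` and `b = 1/(2γ+1)`.
Since `φ'' = 1/x`, each term `c φ(p s + q)` contributes `c p² / (p s + q)` to `h''`, so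
`h''(s) = 1/s + a/(1 - s) + 4γ² b/(2γs + 1)`, and clearing denominators leaves a polynomial identity.
-/

open Real Filter Topology

theorem hasDerivAt_deriv_of_eventually_hasDerivAt {f f' : ℝ → ℝ} {f'' x : ℝ}
    (hf : ∀ᶠ y in 𝓝 x, HasDerivAt f (f' y) y) (hf' : HasDerivAt f' f'' x) :
    HasDerivAt (deriv f) f'' x :=
  hf'.congr_of_eventuallyEq (hf.mono fun _ hy => hy.deriv)

section AffineMulLog

variable {p q x : ℝ}

theorem hasDerivAt_mul_log_comp_affine (hx : p * x + q ≠ 0) :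
    HasDerivAt (fun y => (p * y + q) * log (p * y + q)) (p * (log (p * x + q) + 1)) x := by
  have := (hasDerivAt_mul_log hx).comp x (((hasDerivAt_id' x).const_mul p).add_const q)
  exact this.congr_deriv (by ring)

theorem hasDerivAt_log_comp_affine_add_one (hx : p * x + q ≠ 0) :
    HasDerivAt (fun y => p * (log (p * y + q) + 1)) (p ^ 2 / (p * x + q)) x := by
  have := ((((hasDerivAt_id' x).const_mul p).add_const q).log hx).add_const 1 |>.const_mul p
  exact this.congr_deriv (by ring)

end AffineMulLog

theorem hasDerivAt_deriv_sum_mul_log_comp_affine {ι : Type*} (s : Finset ι) (c p q : ι → ℝ)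
    {x : ℝ} (hx : ∀ i ∈ s, p i * x + q i ≠ 0) :
    HasDerivAt (deriv fun y => ∑ i ∈ s, c i * ((p i * y + q i) * log (p i * y + q i)))
      (∑ i ∈ s, c i * (p i ^ 2 / (p i * x + q i))) x := by
  have hnear : ∀ᶠ y in 𝓝 x, ∀ i ∈ s, p i * y + q i ≠ 0 :=
    (eventually_all_finset s).2 fun i hi =>
      ((continuous_const.mul continuous_id).add continuous_const).continuousAt.eventually_ne
        (hx i hi)
  refine hasDerivAt_deriv_of_eventually_hasDerivAt (f' := fun y =>
    ∑ i ∈ s, c i * (p i * (log (p i * y + q i) + 1))) ?_ ?_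
  · filter_upwards [hnear] with y hy
    exact HasDerivAt.fun_sum fun i hi => (hasDerivAt_mul_log_comp_affine (hy i hi)).const_mul _
  · exact HasDerivAt.fun_sum fun i hi => (hasDerivAt_log_comp_affine_add_one (hx i hi)).const_mul _

/-- For the entropy density of the pushing model,
`h(s) = s log s + ((4γ+1)/(2γ+1))(1−s)log(1−s) + ((2γs+1)/(2γ+1)) log(2γs+1)`,
the identity `s(1−s)(1+2γs) h''(s) = 1 + 4γs` holds on `(0,1)`. -/
theorem pushing_entropy_mobility_identity
    (γ : ℝ) (hγ : 0 ≤ γ) (h : ℝ → ℝ)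
    (hh : ∀ s : ℝ, h s = s * Real.log s
        + ((4 * γ + 1) / (2 * γ + 1)) * ((1 - s) * Real.log (1 - s))
        + ((2 * γ * s + 1) / (2 * γ + 1)) * Real.log (2 * γ * s + 1)) :
    ∀ s ∈ Set.Ioo (0 : ℝ) 1,
      s * (1 - s) * (1 + 2 * γ * s) * deriv (deriv h) s = 1 + 4 * γ * s := by
  rintro s ⟨hs0, hs1⟩
  have hγ' : 2 * γ + 1 ≠ 0 := by positivity
  have hγs : 2 * γ * s + 1 ≠ 0 := by positivity
  set c : Fin 3 → ℝ := ![1, (4 * γ + 1) / (2 * γ + 1), 1 / (2 * γ + 1)]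
  set p : Fin 3 → ℝ := ![1, -1, 2 * γ]
  set q : Fin 3 → ℝ := ![0, 1, 1]
  have h_mixture : h = fun y => ∑ i, c i * ((p i * y + q i) * log (p i * y + q i)) := by
    funext y
    simp only [hh, Fin.sum_univ_three, Matrix.cons_val_zero, Matrix.cons_val_one, Matrix.cons_val,
      c, p, q, one_mul, add_zero, neg_one_mul, neg_add_eq_sub]
    ring
  have hx : ∀ i ∈ Finset.univ, p i * s + q i ≠ 0 := by
    simp [Fin.forall_fin_succ, p, q, hs0.ne', neg_add_eq_sub, sub_ne_zero.2 hs1.ne', hγs]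
  rw [h_mixture, (hasDerivAt_deriv_sum_mul_log_comp_affine _ c p q hx).deriv]
  simp only [Fin.sum_univ_three, Matrix.cons_val_zero, Matrix.cons_val_one, Matrix.cons_val,
    c, p, q, neg_one_mul, neg_add_eq_sub]
  have : 1 - s ≠ 0 := by linarith
  field_simp
  ring
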